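/- With h as in the 1D two-interval Casimir setup, the derivative of E_rel(a₂) = -π/(24(a₂-b₁)) with respect to a₂ equals π/(24(a₂-b₁)²), and this equals -(1/4)·(-π/(6(a₂-b₁)²)), verifying the Hadamard variation identity δE_rel = -(1/4)[∂_ν∂_ν'(H_O^{-1} - H_{O₂}^{-1})](a₂,a₂) with [∂_x∂_y(H_O^{-1} - H_{O₂}^{-1})](a₂,a₂) = (2/π)∫₀^∞(k - k·coth(k(a₂-b₁)))dk = -π/(6(a₂-b₁)²). -/

import Mathlib

/-!
Expanding `coth x - 1 = 2e^{-2x}/(1 - e^{-2x})` as a geometric series gives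
`k coth(kL) - k = ∑_{n ≥ 1} 2k e^{-2nLk}`. Each term integrates to `1/(2L²n²)`, so the integral
is `ζ(2)/(2L²) = π²/(12L²)`, and `(2/π)` times its negative is `-π/(6L²)`, which is `-4` times
the derivative `π/(24L²)` of `-π/(24L)`.
-/

open Real Set MeasureTheory

lemma hasDerivAt_const_div_mul_sub (c d b t : ℝ) (hd : d ≠ 0) (ht : t ≠ b) :
    HasDerivAt (fun s => c / (d * (s - b))) (-c / (d * (t - b) ^ 2)) t := by
  have hden : HasDerivAt (fun s => d * (s - b)) d t := by
    simpa using ((hasDerivAt_id t).sub_const b).const_mul d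
  have htb : t - b ≠ 0 := sub_ne_zero.2 ht
  refine ((hasDerivAt_const t c).fun_div hden (mul_ne_zero hd htb)).congr_deriv ?_
  field_simp
  ring

lemma Real.coth_sub_one_eq {x : ℝ} (hx : 0 < x) :
    cosh x / sinh x - 1 = 2 * exp (-(2 * x)) / (1 - exp (-(2 * x))) := by
  have hsinh : sinh x ≠ 0 := (sinh_pos_iff.2 hx).ne'
  have hsq : exp (-(2 * x)) = exp (-x) ^ 2 := by rw [← exp_nat_mul]; ring_nf
  rw [div_sub_one hsinh, cosh_sub_sinh, sinh_eq, hsq, exp_neg x]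
  field_simp

lemma Real.hasSum_coth_sub_one {x : ℝ} (hx : 0 < x) :
    HasSum (fun n : ℕ => 2 * exp (-(2 * (n + 1) * x))) (cosh x / sinh x - 1) := by
  have hr : exp (-(2 * x)) < 1 := exp_lt_one_iff.2 (by linarith)
  rw [coth_sub_one_eq hx, div_eq_mul_inv]
  refine ((hasSum_geometric_of_lt_one (exp_pos _).le hr).mul_left _).congr_fun fun n => ?_
  rw [← exp_nat_mul, mul_assoc 2 (exp _), ← exp_add]
  ring_nf

lemma integrableOn_Ioi_mul_exp_neg_mul {c : ℝ} (hc : 0 < c) :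
    IntegrableOn (fun k => k * exp (-(c * k))) (Ioi 0) := by
  simpa using integrableOn_rpow_mul_exp_neg_mul_rpow (s := 1) (p := 1) (by norm_num) one_pos hc

lemma integral_Ioi_mul_exp_neg_mul {c : ℝ} (hc : 0 < c) :
    ∫ k in Ioi (0 : ℝ), k * exp (-(c * k)) = 1 / c ^ 2 := by
  have h := integral_rpow_mul_exp_neg_mul_Ioi two_pos hc
  norm_num at h
  simpa [one_div_pow] using h

lemma hasSum_one_div_nat_add_one_sq :
    HasSum (fun n : ℕ => 1 / ((n : ℝ) + 1) ^ 2) (π ^ 2 / 6) := by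
  simpa using (hasSum_nat_add_iff' 1).2 hasSum_zeta_two

lemma integral_Ioi_mul_coth_sub_self {L : ℝ} (hL : 0 < L) :
    ∫ k in Ioi (0 : ℝ), (k * (cosh (k * L) / sinh (k * L)) - k) = π ^ 2 / (12 * L ^ 2) := by
  set F : ℕ → ℝ → ℝ := fun n k => 2 * (k * exp (-(2 * (n + 1) * L * k)))
  have hc (n : ℕ) : 0 < 2 * ((n : ℝ) + 1) * L := by positivity
  have hF_int (n : ℕ) : IntegrableOn (F n) (Ioi 0) :=
    (integrableOn_Ioi_mul_exp_neg_mul (hc n)).const_mul 2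
  have hF_integral (n : ℕ) :
      ∫ k in Ioi (0 : ℝ), F n k = 1 / (2 * L ^ 2) * (1 / ((n : ℝ) + 1) ^ 2) := by
    rw [integral_const_mul, integral_Ioi_mul_exp_neg_mul (hc n)]
    field_simp
  have hF_norm : (fun n => ∫ k in Ioi (0 : ℝ), ‖F n k‖) = fun n => ∫ k in Ioi (0 : ℝ), F n k :=
    funext fun n => setIntegral_congr_fun measurableSet_Ioi fun k (hk : 0 < k) =>
      norm_of_nonneg (by positivity)
  have hsum : HasSum (fun n => ∫ k in Ioi (0 : ℝ), F n k) (π ^ 2 / (12 * L ^ 2)) := by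
    have hval : 1 / (2 * L ^ 2) * (π ^ 2 / 6) = π ^ 2 / (12 * L ^ 2) := by
      field_simp
      ring
    exact hval ▸ (hasSum_one_div_nat_add_one_sq.mul_left _).congr_fun hF_integral
  have hpointwise : EqOn (fun k => k * (cosh (k * L) / sinh (k * L)) - k)
      (fun k => ∑' n, F n k) (Ioi 0) := fun k (hk : 0 < k) => by
    refine (HasSum.tsum_eq ?_).symm
    have h := (hasSum_coth_sub_one (mul_pos hk hL)).mul_left k
    rw [mul_sub_one] at h
    refine h.congr_fun fun n => ?_
    simp only [F]
    ring_nf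
  rw [setIntegral_congr_fun measurableSet_Ioi hpointwise]
  refine (hasSum_integral_of_summable_integral_norm hF_int ?_).unique hsum
  exact hF_norm ▸ hsum.summable

theorem one_dim_hadamard_variation_identity_general
    (b₁ a₂ : ℝ) (h₂ : b₁ < a₂) :
    deriv (fun t : ℝ => -Real.pi / (24 * (t - b₁))) a₂
        = Real.pi / (24 * (a₂ - b₁) ^ 2)
    ∧
    (2 / Real.pi) * (∫ k in Set.Ioi (0 : ℝ),
        (k - k * (Real.cosh (k * (a₂ - b₁)) / Real.sinh (k * (a₂ - b₁)))))
      = -Real.pi / (6 * (a₂ - b₁) ^ 2)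
    ∧
    deriv (fun t : ℝ => -Real.pi / (24 * (t - b₁))) a₂
      = -(1 / 4) * ((2 / Real.pi) * (∫ k in Set.Ioi (0 : ℝ),
          (k - k * (Real.cosh (k * (a₂ - b₁)) / Real.sinh (k * (a₂ - b₁)))))) := by
  have hL : 0 < a₂ - b₁ := sub_pos.2 h₂
  have hderiv : deriv (fun t : ℝ => -π / (24 * (t - b₁))) a₂ = π / (24 * (a₂ - b₁) ^ 2) := by
    rw [(hasDerivAt_const_div_mul_sub (-π) 24 b₁ a₂ (by norm_num) h₂.ne').deriv, neg_neg]
  have hintegral : ∫ k in Ioi (0 : ℝ), (k - k * (cosh (k * (a₂ - b₁)) / sinh (k * (a₂ - b₁))))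
      = -(π ^ 2 / (12 * (a₂ - b₁) ^ 2)) := by
    rw [← integral_Ioi_mul_coth_sub_self hL, ← integral_neg]
    simp_rw [neg_sub]
  have hkernel : (2 / π) * (∫ k in Ioi (0 : ℝ),
      (k - k * (cosh (k * (a₂ - b₁)) / sinh (k * (a₂ - b₁))))) = -π / (6 * (a₂ - b₁) ^ 2) := by
    rw [hintegral]
    field_simp
    ring
  refine ⟨hderiv, hkernel, ?_⟩
  rw [hderiv, hkernel]
  field_simp
  ring

/-- Hadamard variation identity in the 1-D two-interval Casimir setup
(`O₁ = (a₁,b₁)`, `O₂ = (a₂,b₂)`, `a₁ < b₁ < a₂ < b₂`):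
(i) `d/da₂ E_rel(a₂) = π/(24(a₂-b₁)²)` for `E_rel(a₂) = -π/(24(a₂-b₁))`;
(ii) `[∂_ν∂_ν'(H_O⁻¹ - H_{O₂}⁻¹)](a₂,a₂) = (2/π)∫₀^∞ (k - k·coth(k(a₂-b₁))) dk
      = -π/(6(a₂-b₁)²)`;
(iii) `δE_rel = -(1/4)·[∂_ν∂_ν'(H_O⁻¹ - H_{O₂}⁻¹)](a₂,a₂)`. -/
theorem one_dim_hadamard_variation_identity
    (a₁ b₁ a₂ b₂ : ℝ) (h₁ : a₁ < b₁) (h₂ : b₁ < a₂) (h₃ : a₂ < b₂) :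
    deriv (fun t : ℝ => -Real.pi / (24 * (t - b₁))) a₂
        = Real.pi / (24 * (a₂ - b₁) ^ 2)
    ∧
    (2 / Real.pi) * (∫ k in Set.Ioi (0 : ℝ),
        (k - k * (Real.cosh (k * (a₂ - b₁)) / Real.sinh (k * (a₂ - b₁)))))
      = -Real.pi / (6 * (a₂ - b₁) ^ 2)
    ∧
    deriv (fun t : ℝ => -Real.pi / (24 * (t - b₁))) a₂
      = -(1 / 4) * ((2 / Real.pi) * (∫ k in Set.Ioi (0 : ℝ),
          (k - k * (Real.cosh (k * (a₂ - b₁)) / Real.sinh (k * (a₂ - b₁)))))) :=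
  one_dim_hadamard_variation_identity_general b₁ a₂ h₂
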